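/- Let n ≥ 1, let Σ be a real symmetric positive definite n×n matrix, let Θ be a real antisymmetric n×n matrix, let μ, w ∈ ℝⁿ, and set ζ := (−Σ + iΘ) w ∈ ℂⁿ. Then Re( ζᵀΣ⁻¹ζ ) = wᵀΣw − wᵀΘᵀΣ⁻¹Θw, and consequently | e^{(1/4) ζᵀΣ⁻¹ζ} Φ_{μ,Σ}(w) | = e^{ −(1/4) wᵀΣw − (1/4) wᵀΘᵀΣ⁻¹Θw } ≤ e^{ −(1/4) wᵀΣw }. -/

import Mathlib

open MeasureTheory Matrix Real

noncomputable section

/-- Quadratic form `uᵀ A u`. -/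
def qf {n : ℕ} (A : Matrix (Fin n) (Fin n) ℝ) (u : Fin n → ℝ) : ℝ := u ⬝ᵥ A.mulVec u

/-- Complex bilinear form `zᵀ A z` (no conjugation) for a real matrix `A`. -/
def qfC {n : ℕ} (A : Matrix (Fin n) (Fin n) ℝ) (z : Fin n → ℂ) : ℂ :=
  z ⬝ᵥ (A.map (fun a => (a : ℂ))).mulVec z

/-- Gaussian quasi-characteristic function `Φ_{μ,Σ}(u) = exp(iμᵀu − (1/2)uᵀΣu)`. -/
def qcf {n : ℕ} (μ : Fin n → ℝ) (Sg : Matrix (Fin n) (Fin n) ℝ) (u : Fin n → ℝ) : ℂ :=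
  Complex.exp (Complex.I * ((μ ⬝ᵥ u : ℝ) : ℂ) - (1/2 : ℂ) * ((qf Sg u : ℝ) : ℂ))

/-- `(−Σ + iΘ) w ∈ ℂⁿ`. -/
def zetaP {n : ℕ} (Sg Th : Matrix (Fin n) (Fin n) ℝ) (w : Fin n → ℝ) : Fin n → ℂ :=
  (Sg.map (fun a => (-a : ℂ)) + Complex.I • Th.map (fun a => (a : ℂ))).mulVec
    (fun k => (w k : ℂ))

/-!
Write `ζ = a + i b` with the real vectors `a = -Σw` and `b = Θw`. For any real matrix `A` the
cross terms of `zᵀAz` are purely imaginary, so `Re(ζᵀΣ⁻¹ζ) = aᵀΣ⁻¹a - bᵀΣ⁻¹b`, and these two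
terms are `wᵀΣw` and `wᵀΘᵀΣ⁻¹Θw`; the latter is nonnegative because `Σ⁻¹` is positive
semidefinite. The factor `Φ_{μ,Σ}(w)` only contributes `e^{-wᵀΣw/2}` to the modulus.
-/

section

variable {n : ℕ}

theorem re_qfC_ofReal_add_I_mul (A : Matrix (Fin n) (Fin n) ℝ) (a b : Fin n → ℝ) :
    (qfC A fun k => (a k : ℂ) + Complex.I * b k).re = qf A a - qf A b := by
  simp only [qfC, qf, dotProduct, mulVec, Finset.mul_sum, Complex.re_sum, ← Finset.sum_sub_distrib]
  refine Finset.sum_congr rfl fun i _ => Finset.sum_congr rfl fun j _ => ?_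
  simp

theorem zetaP_eq_ofReal_add_I_mul (Sg Th : Matrix (Fin n) (Fin n) ℝ) (w : Fin n → ℝ) :
    zetaP Sg Th w = fun k => ((-(Sg *ᵥ w)) k : ℂ) + Complex.I * (Th *ᵥ w) k := by
  ext k
  simp [zetaP, mulVec, dotProduct, add_mul, Finset.sum_add_distrib, Finset.mul_sum, mul_assoc]

theorem qf_neg (A : Matrix (Fin n) (Fin n) ℝ) (v : Fin n → ℝ) : qf A (-v) = qf A v := by
  simp [qf, mulVec_neg]

theorem qf_mulVec (A B : Matrix (Fin n) (Fin n) ℝ) (v : Fin n → ℝ) :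
    qf A (B *ᵥ v) = qf (Bᵀ * A * B) v := by
  rw [qf, qf, ← mulVec_mulVec, ← mulVec_mulVec, dotProduct_mulVec v Bᵀ, vecMul_transpose]

theorem qf_inv_mulVec_self {A : Matrix (Fin n) (Fin n) ℝ} (hA : IsUnit A.det) (v : Fin n → ℝ) :
    qf A⁻¹ (A *ᵥ v) = qf A v := by
  rw [qf, mulVec_mulVec, nonsing_inv_mul A hA, one_mulVec, dotProduct_comm, qf]

theorem re_qfC_inv_zetaP {Sg : Matrix (Fin n) (Fin n) ℝ} (hSg : IsUnit Sg.det)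
    (Th : Matrix (Fin n) (Fin n) ℝ) (w : Fin n → ℝ) :
    (qfC Sg⁻¹ (zetaP Sg Th w)).re = qf Sg w - qf (Thᵀ * Sg⁻¹ * Th) w := by
  rw [zetaP_eq_ofReal_add_I_mul, re_qfC_ofReal_add_I_mul, qf_neg, qf_inv_mulVec_self hSg, qf_mulVec]

theorem norm_exp_mul_qcf (z : ℂ) (μ : Fin n → ℝ) (Sg : Matrix (Fin n) (Fin n) ℝ) (w : Fin n → ℝ) :
    ‖Complex.exp z * qcf μ Sg w‖ = Real.exp (z.re - qf Sg w / 2) := by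
  rw [qcf, ← Complex.exp_add, Complex.norm_exp]
  congr 1
  rw [Complex.add_re, Complex.sub_re, Complex.re_mul_ofReal, Complex.re_mul_ofReal, Complex.I_re,
    Complex.div_ofNat_re, Complex.one_re]
  ring

theorem Matrix.PosSemidef.qf_transpose_mul_inv_mul_nonneg {Sg : Matrix (Fin n) (Fin n) ℝ}
    (hSg : Sg.PosSemidef) (Th : Matrix (Fin n) (Fin n) ℝ) (w : Fin n → ℝ) :
    0 ≤ qf (Thᵀ * Sg⁻¹ * Th) w := by
  rw [← qf_mulVec]
  exact hSg.inv.dotProduct_mulVec_nonneg _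

end

theorem stmt13_general {n : ℕ} (Sg : Matrix (Fin n) (Fin n) ℝ)
    (hpos : Sg.PosDef)
    (Th : Matrix (Fin n) (Fin n) ℝ) (μ w : Fin n → ℝ) :
    (qfC Sg⁻¹ (zetaP Sg Th w)).re = qf Sg w - qf (Thᵀ * Sg⁻¹ * Th) w ∧
    ‖Complex.exp ((1/4 : ℂ) * qfC Sg⁻¹ (zetaP Sg Th w)) * qcf μ Sg w‖ =
      Real.exp (-(1/4 : ℝ) * qf Sg w - (1/4 : ℝ) * qf (Thᵀ * Sg⁻¹ * Th) w) ∧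
    ‖Complex.exp ((1/4 : ℂ) * qfC Sg⁻¹ (zetaP Sg Th w)) * qcf μ Sg w‖ ≤
      Real.exp (-(1/4 : ℝ) * qf Sg w) := by
  have hre := re_qfC_inv_zetaP ((isUnit_iff_isUnit_det Sg).mp hpos.isUnit) Th w
  have hnorm : ‖Complex.exp ((1/4 : ℂ) * qfC Sg⁻¹ (zetaP Sg Th w)) * qcf μ Sg w‖ =
      Real.exp (-(1/4 : ℝ) * qf Sg w - (1/4 : ℝ) * qf (Thᵀ * Sg⁻¹ * Th) w) := by
    rw [norm_exp_mul_qcf, show (1/4 : ℂ) = ((1/4 : ℝ) : ℂ) by norm_num, Complex.re_ofReal_mul, hre]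
    congr 1
    ring
  refine ⟨hre, hnorm, hnorm ▸ Real.exp_le_exp.mpr ?_⟩
  linarith [hpos.posSemidef.qf_transpose_mul_inv_mul_nonneg Th w]

/-- with `ζ := (−Σ + iΘ)w`,
`Re(ζᵀΣ⁻¹ζ) = wᵀΣw − wᵀΘᵀΣ⁻¹Θw`, and consequently
`|e^{(1/4)ζᵀΣ⁻¹ζ} Φ_{μ,Σ}(w)| = e^{−(1/4)wᵀΣw − (1/4)wᵀΘᵀΣ⁻¹Θw} ≤ e^{−(1/4)wᵀΣw}`. -/
theorem stmt13 {n : ℕ} (hn : 1 ≤ n) (Sg : Matrix (Fin n) (Fin n) ℝ)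
    (hsymm : Sg.IsSymm) (hpos : Sg.PosDef)
    (Th : Matrix (Fin n) (Fin n) ℝ) (hanti : Thᵀ = -Th) (μ w : Fin n → ℝ) :
    (qfC Sg⁻¹ (zetaP Sg Th w)).re = qf Sg w - qf (Thᵀ * Sg⁻¹ * Th) w ∧
    ‖Complex.exp ((1/4 : ℂ) * qfC Sg⁻¹ (zetaP Sg Th w)) * qcf μ Sg w‖ =
      Real.exp (-(1/4 : ℝ) * qf Sg w - (1/4 : ℝ) * qf (Thᵀ * Sg⁻¹ * Th) w) ∧
    ‖Complex.exp ((1/4 : ℂ) * qfC Sg⁻¹ (zetaP Sg Th w)) * qcf μ Sg w‖ ≤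
      Real.exp (-(1/4 : ℝ) * qf Sg w) :=
  stmt13_general Sg hpos Th μ w
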